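/- arXiv:1209.4597 — 3 statements merged into one kernel-verified Lean document; each statement's English description precedes it below -/
import Mathlib

section
/- Let φ be a finite potent endomorphism of a k-vector space V and W a φ-invariant subspace of V. Then the induced endomorphisms of W and V/W are finite potent and tr_V(φ) = tr_W(φ|_W) + tr_{V/W}(φ̄), where φ̄ is the induced map on V/W. -/
/-- An endomorphism is finite potent if some power has finite-dimensional range. -/
def IsFinitePotent {k V : Type*} [Field k] [AddCommGroup V] [Module k V]
    (φ : V →ₗ[k] V) : Prop :=
  ∃ n : ℕ, FiniteDimensional k (LinearMap.range (φ ^ n))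

/-- `c` is a value of Tate's trace of `φ`: the ordinary trace of the restriction of `φ` to
any finite-dimensional `φ`-invariant subspace `W` with `φⁿ V ⊆ W` for some `n` equals `c`. -/
def TateTraceSpec {k V : Type*} [Field k] [AddCommGroup V] [Module k V]
    (φ : V →ₗ[k] V) (c : k) : Prop :=
  ∀ (W : Submodule k V) (hW : ∀ x ∈ W, φ x ∈ W), FiniteDimensional k W →
    (∃ n : ℕ, LinearMap.range (φ ^ n) ≤ W) →
    LinearMap.trace k W (φ.restrict hW) = c

open Classical in
/-- Tate's trace of a finite potent endomorphism. -/
noncomputable def tateTrace {k V : Type*} [Field k] [AddCommGroup V] [Module k V]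
    (φ : V →ₗ[k] V) : k :=
  if h : ∃ c, TateTraceSpec φ c then h.choose else 0

/-!
For finite-dimensional `M` and an `f`-invariant subspace `p`, a retraction `r` of the inclusion
`ι : p → M` splits `id_M = ι ∘ r + s ∘ π` with `π : M → M ⧸ p`, and cyclicity of the trace gives
`tr f = tr (f|p) + tr (f mod p)`. If `f mod p` is nilpotent the second term vanishes. Hence Tate's
trace is well defined: two finite-dimensional `φ`-invariant subspaces `U, U'` containing powers
`φⁿ V, φᵐ V` both compute the trace of `φ` on `U ⊔ U'`, modulo either of which `φ` is nilpotent.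

With `U = φⁿ V`, the inclusion `U ∩ W → W` and the injection `U ⧸ (U ∩ W) → V ⧸ W` identify the
restriction and the quotient of `φ|U` with `φ|W` and `φ mod W` on subspaces of the same kind, so
additivity of Tate's trace is the finite-dimensional additivity on `U`.
-/

namespace LinearMap

section Ring

variable {R V : Type*} [Ring R] [AddCommGroup V] [Module R V]

theorem mapsTo_range_pow (φ : Module.End R V) (n : ℕ) :
    ∀ x ∈ range (φ ^ n), φ x ∈ range (φ ^ n) := by
  rintro _ ⟨y, rfl⟩
  exact ⟨φ y, LinearMap.congr_fun (pow_mul_comm' φ n) y⟩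

variable {φ : Module.End R V} {U W : Submodule R V} {n : ℕ}

theorem range_pow_restrict_le (hW : ∀ x ∈ W, φ x ∈ W) (hn : range (φ ^ n) ≤ U) :
    range ((φ.restrict hW) ^ n) ≤
      range (U.subtype.restrict (p := W.comap U.subtype) fun _ hx => hx) := by
  rintro _ ⟨w, rfl⟩
  rw [Module.End.pow_restrict]
  exact ⟨⟨⟨(φ ^ n) w, hn (mem_range_self (φ ^ n) (w : V))⟩,
    Module.End.pow_apply_mem_of_forall_mem n hW w w.2⟩, rfl⟩

theorem range_pow_mapQ_le (hW : ∀ x ∈ W, φ x ∈ W) (hn : range (φ ^ n) ≤ U) :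
    range ((W.mapQ W φ hW) ^ n) ≤ range ((W.comap U.subtype).mapQ W U.subtype le_rfl) := by
  rintro _ ⟨x, rfl⟩
  obtain ⟨v, rfl⟩ := W.mkQ_surjective x
  rw [← Submodule.mapQ_pow]
  exact ⟨Submodule.Quotient.mk ⟨(φ ^ n) v, hn (mem_range_self (φ ^ n) v)⟩, rfl⟩

end Ring

theorem trace_eq_of_comp_eq {R M N : Type*} [CommRing R] [AddCommGroup M] [Module R M]
    [AddCommGroup N] [Module R N] (e : M ≃ₗ[R] N) {f : Module.End R M} {g : Module.End R N}
    (h : e.toLinearMap ∘ₗ f = g ∘ₗ e) : trace R M f = trace R N g := by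
  rw [← trace_conj' f e]
  congr 1
  ext x
  simp [LinearEquiv.conj_apply, h]

section FiniteDimensional

variable {k M : Type*} [Field k] [AddCommGroup M] [Module k M] [FiniteDimensional k M]

theorem trace_eq_trace_restrict_add_trace_mapQ {f : Module.End k M} {p : Submodule k M}
    (hp : ∀ x ∈ p, f x ∈ p) :
    trace k M f = trace k p (f.restrict hp) + trace k (M ⧸ p) (p.mapQ p f hp) := by
  obtain ⟨r, hr⟩ := p.subtype.exists_leftInverse_of_injective p.ker_subtype
  have hr' : ∀ x : p, r x = x := LinearMap.congr_fun hr
  set s := p.liftQ (LinearMap.id - p.subtype ∘ₗ r) fun x hx => by simp [hr' ⟨x, hx⟩]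
  have hsplit : p.subtype ∘ₗ r + s ∘ₗ p.mkQ = LinearMap.id := by
    ext x; simp [s]
  have hrestrict : r ∘ₗ f ∘ₗ p.subtype = f.restrict hp := by
    ext x; exact congrArg Subtype.val (hr' ⟨f x, hp x x.2⟩)
  have hmapQ : p.mkQ ∘ₗ f ∘ₗ s = p.mapQ p f hp := by
    ext x
    simp [s, ← (Submodule.Quotient.mk_eq_zero p).mpr (hp _ (r x).2)]
  calc trace k M f = trace k M ((f ∘ₗ p.subtype) ∘ₗ r) + trace k M ((f ∘ₗ s) ∘ₗ p.mkQ) := by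
        rw [← map_add, comp_assoc, comp_assoc, ← comp_add, hsplit, comp_id]
    _ = trace k p (r ∘ₗ f ∘ₗ p.subtype) + trace k (M ⧸ p) (p.mkQ ∘ₗ f ∘ₗ s) :=
        congrArg₂ (· + ·) (trace_comp_comm' r _) (trace_comp_comm' p.mkQ _)
    _ = _ := by rw [hrestrict, hmapQ]

theorem trace_eq_trace_restrict_of_isNilpotent_mapQ {f : Module.End k M} {p : Submodule k M}
    (hp : ∀ x ∈ p, f x ∈ p) (hnil : IsNilpotent (p.mapQ p f hp)) :
    trace k M f = trace k p (f.restrict hp) := by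
  rw [trace_eq_trace_restrict_add_trace_mapQ hp, (isNilpotent_trace_of_isNilpotent hnil).eq_zero,
    add_zero]

end FiniteDimensional

theorem trace_restrict_eq_of_le_of_range_pow_le {k V : Type*} [Field k] [AddCommGroup V]
    [Module k V] {φ : Module.End k V} {U T : Submodule k V} (hUT : U ≤ T)
    (hU : ∀ x ∈ U, φ x ∈ U) (hT : ∀ x ∈ T, φ x ∈ T) [FiniteDimensional k T]
    {n : ℕ} (hn : range (φ ^ n) ≤ U) :
    trace k T (φ.restrict hT) = trace k U (φ.restrict hU) := by
  set p := U.comap T.subtype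
  have hp : ∀ x ∈ p, φ.restrict hT x ∈ p := fun x hx => hU _ hx
  have hnil : IsNilpotent (p.mapQ p (φ.restrict hT) hp) := by
    refine ⟨n, ?_⟩
    rw [← Submodule.mapQ_pow]
    ext x
    refine (Submodule.Quotient.mk_eq_zero p).mpr ?_
    change ((φ.restrict hT ^ n) x : V) ∈ U
    rw [Module.End.pow_restrict, coe_restrict_apply]
    exact hn (mem_range_self _ _)
  rw [trace_eq_trace_restrict_of_isNilpotent_mapQ hp hnil]
  exact trace_eq_of_comp_eq (Submodule.comapSubtypeEquivOfLe hUT) rfl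

end LinearMap

open LinearMap

section TateTrace

variable {k V M : Type*} [Field k] [AddCommGroup V] [Module k V] [AddCommGroup M] [Module k M]

theorem tateTraceSpec_trace_restrict {φ : Module.End k V} {U : Submodule k V}
    (hU : ∀ x ∈ U, φ x ∈ U) [FiniteDimensional k U] {n : ℕ} (hn : range (φ ^ n) ≤ U) :
    TateTraceSpec φ (trace k U (φ.restrict hU)) := by
  rintro U' hU' hU'fin ⟨m, hm⟩
  have hT : ∀ x ∈ U ⊔ U', φ x ∈ U ⊔ U' := by
    intro x hx
    obtain ⟨u, hu, u', hu', rfl⟩ := Submodule.mem_sup.mp hx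
    exact map_add φ u u' ▸ Submodule.add_mem_sup (hU u hu) (hU' u' hu')
  rw [← trace_restrict_eq_of_le_of_range_pow_le le_sup_right hU' hT hm,
    trace_restrict_eq_of_le_of_range_pow_le le_sup_left hU hT hn]

theorem tateTrace_eq_trace_restrict {φ : Module.End k V} {U : Submodule k V}
    (hU : ∀ x ∈ U, φ x ∈ U) [FiniteDimensional k U] {n : ℕ} (hn : range (φ ^ n) ≤ U) :
    tateTrace φ = trace k U (φ.restrict hU) := by
  have hspec : ∃ c, TateTraceSpec φ c := ⟨_, tateTraceSpec_trace_restrict hU hn⟩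
  rw [tateTrace, dif_pos hspec]
  exact (hspec.choose_spec U hU inferInstance ⟨n, hn⟩).symm

theorem tateTrace_eq_trace_of_comp_eq {φ : Module.End k V} {f : Module.End k M}
    [FiniteDimensional k M] {ι : M →ₗ[k] V} (hι : Function.Injective ι) (hf : φ ∘ₗ ι = ι ∘ₗ f)
    {n : ℕ} (hn : range (φ ^ n) ≤ range ι) :
    tateTrace φ = trace k M f := by
  have hU : ∀ x ∈ range ι, φ x ∈ range ι := by
    rintro _ ⟨m, rfl⟩
    exact ⟨f m, (LinearMap.congr_fun hf m).symm⟩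
  rw [tateTrace_eq_trace_restrict hU hn]
  refine (trace_eq_of_comp_eq (LinearEquiv.ofInjective ι hι) ?_).symm
  ext m
  exact (LinearMap.congr_fun hf m).symm

theorem isFinitePotent_of_range_pow_le_range {φ : Module.End k V} [FiniteDimensional k M]
    (ι : M →ₗ[k] V) {n : ℕ} (hn : range (φ ^ n) ≤ range ι) : IsFinitePotent φ :=
  ⟨n, Submodule.finiteDimensional_of_le hn⟩

end TateTrace

theorem tateTrace_additive_on_invariant_subspace
    {k V : Type*} [Field k] [AddCommGroup V] [Module k V]
    (φ : V →ₗ[k] V) (hφ : IsFinitePotent φ)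
    (W : Submodule k V) (hW : ∀ x ∈ W, φ x ∈ W) :
    IsFinitePotent (φ.restrict hW) ∧
    IsFinitePotent (W.mapQ W φ (fun x hx => hW x hx)) ∧
    tateTrace φ =
      tateTrace (φ.restrict hW) + tateTrace (W.mapQ W φ (fun x hx => hW x hx)) := by
  obtain ⟨n, hUfin⟩ := hφ
  set U := range (φ ^ n)
  have hU := mapsTo_range_pow φ n
  have hp : ∀ x ∈ W.comap U.subtype, φ.restrict hU x ∈ W.comap U.subtype := fun x hx => hW _ hx
  have hWn := range_pow_restrict_le hW (le_refl U)
  have hQn := range_pow_mapQ_le hW (le_refl U)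
  refine ⟨isFinitePotent_of_range_pow_le_range _ hWn,
    isFinitePotent_of_range_pow_le_range _ hQn, ?_⟩
  rw [tateTrace_eq_trace_restrict hU le_rfl, trace_eq_trace_restrict_add_trace_mapQ hp]
  congr 1
  · refine (tateTrace_eq_trace_of_comp_eq ?_ (by ext; rfl) hWn).symm
    exact (injective_restrict_iff _).mpr (by rw [Submodule.ker_subtype]; exact disjoint_bot_right)
  · refine (tateTrace_eq_trace_of_comp_eq ?_ (by ext; rfl) hQn).symm
    rw [← ker_eq_bot, Submodule.ker_mapQ, Submodule.mkQ_map_self]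
end

section
/- The φ-invariant decomposition V = W_φ ⊕ U_φ of a finite potent endomorphism φ (with W_φ finite-dimensional, φ|_{W_φ} an isomorphism, φ|_{U_φ} nilpotent) is unique, and Tate's trace tr_V(φ) equals the ordinary trace of φ|_{W_φ}. -/
namespace Module.End

section Semiring

variable {R M : Type*} [Semiring R] [AddCommMonoid M] [Module R M]

theorem ker_pow_le_ker_pow_of_le (f : Module.End R M) {m n : ℕ} (hmn : m ≤ n) :
    LinearMap.ker (f ^ m) ≤ LinearMap.ker (f ^ n) := by
  rw [← pow_sub_mul_pow f hmn, mul_eq_comp]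
  exact LinearMap.ker_le_ker_comp _ _

theorem range_pow_le_range_pow_of_le (f : Module.End R M) {m n : ℕ} (hmn : m ≤ n) :
    LinearMap.range (f ^ n) ≤ LinearMap.range (f ^ m) := by
  rw [← pow_mul_pow_sub f hmn, mul_eq_comp]
  exact LinearMap.range_comp_le_range _ _

variable {f : Module.End R M} {p q : Submodule R M}

theorem coe_restrict_pow_apply (hp : ∀ x ∈ p, f x ∈ p) (n : ℕ) (x : p) :
    ((f.restrict hp ^ n) x : M) = (f ^ n) x := by
  rw [pow_restrict, LinearMap.coe_restrict_apply]

theorem range_pow_eq_of_codisjoint (hp : ∀ x ∈ p, f x ∈ p) (hpq : Codisjoint p q)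
    (hsurj : Function.Surjective (f.restrict hp)) {m n : ℕ}
    (hq : q ≤ LinearMap.ker (f ^ m)) (hmn : m ≤ n) : LinearMap.range (f ^ n) = p := by
  have hqn := hq.trans (ker_pow_le_ker_pow_of_le f hmn)
  apply le_antisymm
  · rintro _ ⟨x, rfl⟩
    obtain ⟨w, u, hw, hu, rfl⟩ := Submodule.codisjoint_iff_exists_add_eq.mp hpq x
    rw [map_add, hqn hu, add_zero]
    exact pow_apply_mem_of_forall_mem n hp w hw
  · intro w hw
    obtain ⟨x, hx⟩ := (hsurj.iterate n) ⟨w, hw⟩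
    exact ⟨x, by rw [← coe_restrict_pow_apply hp, coe_pow, hx]⟩

theorem ker_pow_eq_of_codisjoint (hp : ∀ x ∈ p, f x ∈ p) (hpq : Codisjoint p q)
    (hinj : Function.Injective (f.restrict hp)) {m n : ℕ}
    (hq : q ≤ LinearMap.ker (f ^ m)) (hmn : m ≤ n) : LinearMap.ker (f ^ n) = q := by
  have hqn := hq.trans (ker_pow_le_ker_pow_of_le f hmn)
  refine le_antisymm (fun x hx ↦ ?_) hqn
  obtain ⟨w, u, hw, hu, rfl⟩ := Submodule.codisjoint_iff_exists_add_eq.mp hpq x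
  have hw0 : (⟨w, hw⟩ : p) = 0 := by
    refine (hinj.iterate n) ?_
    rw [← coe_pow, map_zero]
    ext
    rw [coe_restrict_pow_apply hp, ← add_zero ((f ^ n) w), ← hqn hu, ← map_add]
    exact hx
  rw [show w = 0 from congrArg Subtype.val hw0, zero_add]
  exact hu

end Semiring

section Ring

variable {R M : Type*} [Ring R] [AddCommGroup M] [Module R M]
  {f : Module.End R M} {p q : Submodule R M}

theorem isNilpotent_projection_comp_of_range_pow_le (hpq : IsCompl p q)
    (hp : ∀ x ∈ p, f x ∈ p) {n : ℕ} (hn : LinearMap.range (f ^ n) ≤ p) :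
    IsNilpotent (q.projection p hpq.symm ∘ₗ f) := by
  set ρ := q.projection p hpq.symm
  -- `ρ = 1 - π` and `ρ ∘ f ∘ π = 0`, since `f` preserves `p = ker ρ`.
  have hcompress : (ρ ∘ₗ f) ∘ₗ ρ = ρ ∘ₗ f := by
    ext x
    have hx : ρ x = x - p.projection q hpq x := Submodule.projection_eq_self_sub_projection hpq x
    simp only [LinearMap.comp_apply]
    rw [hx, map_sub, map_sub, Submodule.projection_apply_of_mem_right hpq.symm
        (hp _ (Submodule.projection_apply_mem hpq x)), sub_zero]
  have hpow : ∀ j : ℕ, (ρ ∘ₗ f) ^ (j + 1) = ρ ∘ₗ f ^ (j + 1) := by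
    intro j
    induction j with
    | zero => simp
    | succ j ih => rw [pow_succ', ih, mul_eq_comp, ← LinearMap.comp_assoc, hcompress,
        LinearMap.comp_assoc, pow_succ' f (j + 1), mul_eq_comp]
  refine ⟨n + 1, ?_⟩
  ext x
  rw [hpow, LinearMap.comp_apply, pow_succ, mul_apply, LinearMap.zero_apply]
  exact Submodule.projection_apply_of_mem_right hpq.symm (hn ⟨f x, rfl⟩)

end Ring

end Module.End

namespace LinearMap

theorem trace_restrict_eq_of_range_pow_le {K M : Type*} [Field K] [AddCommGroup M] [Module K M]
    [FiniteDimensional K M] (f : Module.End K M) {p : Submodule K M} (hp : ∀ x ∈ p, f x ∈ p)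
    {n : ℕ} (hn : range (f ^ n) ≤ p) : trace K p (f.restrict hp) = trace K M f := by
  obtain ⟨q, hpq⟩ := p.exists_isCompl
  have hsplit : f = p.projection q hpq ∘ₗ f + q.projection p hpq.symm ∘ₗ f := by
    rw [← add_comp, Submodule.projection_add_projection_eq_id, id_comp]
  have hπ : ∀ x, (p.projection q hpq ∘ₗ f) x ∈ p := fun x ↦ Submodule.projection_apply_mem hpq (f x)
  have hπf : (p.projection q hpq ∘ₗ f).restrict (fun x _ ↦ hπ x) = f.restrict hp := by
    ext x
    simp [Submodule.projection_apply_of_mem_left hpq (hp x x.2)]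
  conv_rhs => rw [hsplit]
  rw [map_add, ← trace_restrict_eq_of_forall_mem p _ hπ, hπf,
    (isNilpotent_trace_of_isNilpotent
      (Module.End.isNilpotent_projection_comp_of_range_pow_le hpq hp hn)).eq_zero, add_zero]

theorem trace_restrict_comap_subtype {R M : Type*} [CommRing R] [AddCommGroup M] [Module R M]
    (f : Module.End R M) {p P : Submodule R M} (hpP : p ≤ P) (hp : ∀ x ∈ p, f x ∈ p)
    (hP : ∀ x ∈ P, f x ∈ P)
    (hpP' : ∀ x ∈ p.comap P.subtype, f.restrict hP x ∈ p.comap P.subtype := fun x hx ↦ hp x hx) :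
    trace R (p.comap P.subtype) ((f.restrict hP).restrict hpP') = trace R p (f.restrict hp) := by
  rw [← trace_conj' _ (Submodule.comapSubtypeEquivOfLe hpP)]
  rfl

theorem trace_restrict_eq_of_le_of_pow_mem {K V : Type*} [Field K] [AddCommGroup V] [Module K V]
    (f : Module.End K V) {p P : Submodule K V} [FiniteDimensional K P] (hpP : p ≤ P)
    (hp : ∀ x ∈ p, f x ∈ p) (hP : ∀ x ∈ P, f x ∈ P) {n : ℕ} (hn : ∀ x ∈ P, (f ^ n) x ∈ p) :
    trace K p (f.restrict hp) = trace K P (f.restrict hP) := by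
  rw [← trace_restrict_comap_subtype f hpP hp hP]
  refine trace_restrict_eq_of_range_pow_le (f.restrict hP) _ (n := n) ?_
  rintro _ ⟨x, rfl⟩
  rw [Submodule.mem_comap, Submodule.subtype_apply, Module.End.coe_restrict_pow_apply]
  exact hn x x.2

end LinearMap

section TateTrace

variable {k V : Type*} [Field k] [AddCommGroup V] [Module k V]

theorem tateTraceSpec_of_range_pow_eq (φ : V →ₗ[k] V) {W : Submodule k V}
    (hW : ∀ x ∈ W, φ x ∈ W) {m : ℕ} (hrange : ∀ n, m ≤ n → LinearMap.range (φ ^ n) = W) :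
    TateTraceSpec φ (LinearMap.trace k W (φ.restrict hW)) := by
  rintro P hP hPfd ⟨n, hn⟩
  have hWP : W ≤ P := by
    rw [← hrange (max m n) (le_max_left m n)]
    exact (Module.End.range_pow_le_range_pow_of_le φ (le_max_right m n)).trans hn
  refine (LinearMap.trace_restrict_eq_of_le_of_pow_mem φ hWP hW hP (n := m) ?_).symm
  exact fun x _ ↦ hrange m le_rfl ▸ LinearMap.mem_range_self (φ ^ m) x

theorem tateTrace_eq_of_tateTraceSpec {φ : V →ₗ[k] V} {c : k} (hc : TateTraceSpec φ c)
    (W : Submodule k V) (hW : ∀ x ∈ W, φ x ∈ W) [FiniteDimensional k W]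
    (hn : ∃ n : ℕ, LinearMap.range (φ ^ n) ≤ W) : tateTrace φ = c := by
  have hex : ∃ c, TateTraceSpec φ c := ⟨c, hc⟩
  rw [tateTrace, dif_pos hex, ← hex.choose_spec W hW ‹_› hn, hc W hW ‹_› hn]

end TateTrace

theorem invariant_decomposition_unique_and_tateTrace_general
    {k V : Type*} [Field k] [AddCommGroup V] [Module k V]
    (φ : V →ₗ[k] V)
    (W U : Submodule k V) (hW : ∀ x ∈ W, φ x ∈ W)
    (hc : IsCompl W U) (hfd : FiniteDimensional k W)
    (hbij : Function.Bijective (φ.restrict hW)) (hnil : ∃ n : ℕ, ∀ u ∈ U, (φ ^ n) u = 0)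
    (W' U' : Submodule k V) (hW' : ∀ x ∈ W', φ x ∈ W')
    (hc' : IsCompl W' U')
    (hbij' : Function.Bijective (φ.restrict hW')) (hnil' : ∃ n : ℕ, ∀ u ∈ U', (φ ^ n) u = 0) :
    W = W' ∧ U = U' ∧ tateTrace φ = LinearMap.trace k W (φ.restrict hW) := by
  obtain ⟨m, hm⟩ := hnil
  obtain ⟨m', hm'⟩ := hnil'
  have hrange : ∀ n, m ≤ n → LinearMap.range (φ ^ n) = W := fun _ ↦
    Module.End.range_pow_eq_of_codisjoint hW hc.codisjoint hbij.surjective hm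
  have hrange' : ∀ n, m' ≤ n → LinearMap.range (φ ^ n) = W' := fun _ ↦
    Module.End.range_pow_eq_of_codisjoint hW' hc'.codisjoint hbij'.surjective hm'
  have hker : LinearMap.ker (φ ^ max m m') = U :=
    Module.End.ker_pow_eq_of_codisjoint hW hc.codisjoint hbij.injective hm (le_max_left m m')
  have hker' : LinearMap.ker (φ ^ max m m') = U' :=
    Module.End.ker_pow_eq_of_codisjoint hW' hc'.codisjoint hbij'.injective hm' (le_max_right m m')
  refine ⟨(hrange _ (le_max_left m m')).symm.trans (hrange' _ (le_max_right m m')),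
    hker.symm.trans hker', ?_⟩
  exact tateTrace_eq_of_tateTraceSpec (tateTraceSpec_of_range_pow_eq φ hW hrange) W hW
    ⟨m, (hrange m le_rfl).le⟩

theorem invariant_decomposition_unique_and_tateTrace
    {k V : Type*} [Field k] [AddCommGroup V] [Module k V]
    (φ : V →ₗ[k] V) (hφ : IsFinitePotent φ)
    (W U : Submodule k V) (hW : ∀ x ∈ W, φ x ∈ W)
    (hc : IsCompl W U) (hfd : FiniteDimensional k W) (hU : ∀ x ∈ U, φ x ∈ U)
    (hbij : Function.Bijective (φ.restrict hW)) (hnil : ∃ n : ℕ, ∀ u ∈ U, (φ ^ n) u = 0)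
    (W' U' : Submodule k V) (hW' : ∀ x ∈ W', φ x ∈ W')
    (hc' : IsCompl W' U') (hfd' : FiniteDimensional k W') (hU' : ∀ x ∈ U', φ x ∈ U')
    (hbij' : Function.Bijective (φ.restrict hW')) (hnil' : ∃ n : ℕ, ∀ u ∈ U', (φ ^ n) u = 0) :
    W = W' ∧ U = U' ∧ tateTrace φ = LinearMap.trace k W (φ.restrict hW) :=
  invariant_decomposition_unique_and_tateTrace_general φ W U hW hc hfd hbij hnil W' U' hW' hc' hbij'
    hnil'
end

section
/- If F is a finite-potent subspace of End_k(V), i.e. there exists n such that for any φ₁,…,φₙ ∈ F the space φ₁⋯φₙV is finite-dimensional, then every element of F is finite potent and the map tr_V : F → k is k-linear. -/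
/-!
If `W ≤ U` are `f`-invariant and `f` maps `U` into `W`, then `f|_U` and `f|_W` are `B ∘ A` and
`A ∘ B` for the inclusion `B : W → U` and the corestriction `A : U → W`, so they have the same
trace. When only `fⁿ U ⊆ W`, the chain `W ⊔ fʲ U` (`j = n, …, 0`) interpolates between `W` and `U`
in such steps. Hence the trace does not depend on the admissible subspace (compare two of them
with their sum), and for `φ, ψ ∈ F` the sum of the ranges of all words of length `n` in
`φ, ψ, φ + ψ` is one finite-dimensional subspace admissible for all three, on which the ordinary
trace is linear.
-/

section TateTrace

open LinearMap Submodule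

variable {k V : Type*} [Field k] [AddCommGroup V] [Module k V]

section TraceRestrict

variable (f : V →ₗ[k] V)

theorem trace_restrict_eq_of_mapsTo_le {W U : Submodule k V} (hWU : W ≤ U)
    (hW : ∀ x ∈ W, f x ∈ W) (hU : ∀ x ∈ U, f x ∈ U) (hfU : ∀ x ∈ U, f x ∈ W)
    [FiniteDimensional k U] :
    trace k U (f.restrict hU) = trace k W (f.restrict hW) := by
  have : FiniteDimensional k W := Submodule.finiteDimensional_of_le hWU
  have hBA : Submodule.inclusion hWU ∘ₗ f.restrict hfU = f.restrict hU := rfl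
  have hAB : f.restrict hfU ∘ₗ Submodule.inclusion hWU = f.restrict hW := rfl
  rw [← hBA, ← hAB, trace_comp_comm']

theorem trace_restrict_eq_of_map_pow_le {W U : Submodule k V} (hWU : W ≤ U)
    (hW : ∀ x ∈ W, f x ∈ W) (hU : ∀ x ∈ U, f x ∈ U) [FiniteDimensional k U] {n : ℕ}
    (hn : U.map (f ^ n) ≤ W) :
    trace k U (f.restrict hU) = trace k W (f.restrict hW) := by
  induction n generalizing W with
  | zero =>
    refine trace_restrict_eq_of_mapsTo_le f hWU hW hU fun x hx => ?_
    exact hn ⟨f x, hU x hx, rfl⟩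
  | succ n ih =>
    have hmid : W ⊔ U.map (f ^ n) ≤ U :=
      sup_le hWU (map_le_iff_le_comap.mpr (Module.End.pow_apply_mem_of_forall_mem n hU))
    have hfW' : W ⊔ U.map (f ^ n) ≤ W.comap f := by
      refine sup_le hW ?_
      rwa [← map_le_iff_le_comap, ← map_comp, ← Module.End.mul_eq_comp, ← pow_succ']
    have hW' : ∀ x ∈ W ⊔ U.map (f ^ n), f x ∈ W ⊔ U.map (f ^ n) :=
      fun x hx => le_sup_left (a := W) (hfW' hx)
    have : FiniteDimensional k ↥(W ⊔ U.map (f ^ n)) := Submodule.finiteDimensional_of_le hmid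
    rw [ih hmid hW' le_sup_right]
    exact trace_restrict_eq_of_mapsTo_le f le_sup_left hW hW' hfW'

theorem trace_restrict_eq_of_range_pow_le {W₁ W₂ : Submodule k V}
    (h₁ : ∀ x ∈ W₁, f x ∈ W₁) (h₂ : ∀ x ∈ W₂, f x ∈ W₂)
    [FiniteDimensional k W₁] [FiniteDimensional k W₂] {n₁ n₂ : ℕ}
    (hr₁ : range (f ^ n₁) ≤ W₁) (hr₂ : range (f ^ n₂) ≤ W₂) :
    trace k W₁ (f.restrict h₁) = trace k W₂ (f.restrict h₂) := by
  have hU : ∀ x ∈ W₁ ⊔ W₂, f x ∈ W₁ ⊔ W₂ :=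
    (Module.End.invtSubmodule f).sup_mem h₁ h₂
  rw [← trace_restrict_eq_of_map_pow_le f le_sup_left h₁ hU (map_le_range.trans hr₁),
    trace_restrict_eq_of_map_pow_le f le_sup_right h₂ hU (map_le_range.trans hr₂)]

theorem tateTraceSpec_trace_restrict_s18 {W : Submodule k V} (hW : ∀ x ∈ W, f x ∈ W)
    [FiniteDimensional k W] {n : ℕ} (hr : range (f ^ n) ≤ W) :
    TateTraceSpec f (trace k W (f.restrict hW)) := by
  rintro W' hW' _ ⟨n', hr'⟩
  exact trace_restrict_eq_of_range_pow_le f hW' hW hr' hr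

theorem tateTrace_eq_trace_restrict_s18 {W : Submodule k V} (hW : ∀ x ∈ W, f x ∈ W)
    [FiniteDimensional k W] {n : ℕ} (hr : range (f ^ n) ≤ W) :
    tateTrace f = trace k W (f.restrict hW) := by
  have hex : ∃ c, TateTraceSpec f c := ⟨_, tateTraceSpec_trace_restrict_s18 f hW hr⟩
  rw [tateTrace, dif_pos hex]
  exact (hex.choose_spec W hW ‹_› ⟨n, hr⟩).symm

end TraceRestrict

section WordRange

def wordRange (s : Set (V →ₗ[k] V)) (n : ℕ) : Submodule k V :=
  ⨆ w : Fin n → s, range (List.ofFn fun i => (w i : V →ₗ[k] V)).prod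

theorem range_pow_le_wordRange {s : Set (V →ₗ[k] V)} {φ : V →ₗ[k] V} (hφ : φ ∈ s) (n : ℕ) :
    range (φ ^ n) ≤ wordRange s n := by
  refine le_trans (le_of_eq ?_) (le_iSup _ fun _ => ⟨φ, hφ⟩)
  simp only [List.ofFn_const, List.prod_replicate]

/-- `φ` times a word `w` of length `m + 1` factors through the word `φ :: init w`. -/
theorem range_mul_ofFn_prod_le_wordRange {s : Set (V →ₗ[k] V)} {φ : V →ₗ[k] V} (hφ : φ ∈ s)
    {n : ℕ} (w : Fin n → s) :
    range (φ * (List.ofFn fun i => (w i : V →ₗ[k] V)).prod) ≤ wordRange s n := by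
  cases n with
  | zero => exact le_trans (by simp [Module.End.one_eq_id]) (le_iSup _ w)
  | succ m =>
    refine le_trans ?_ (le_iSup _ (Fin.cons ⟨φ, hφ⟩ (Fin.init w)))
    rw [List.ofFn_succ', List.prod_concat, ← mul_assoc, Module.End.mul_eq_comp]
    refine le_trans (range_comp_le_range _ _) (le_of_eq ?_)
    simp [List.ofFn_succ, Fin.init]

theorem wordRange_mapsTo {s : Set (V →ₗ[k] V)} {φ : V →ₗ[k] V} (hφ : φ ∈ s) (n : ℕ) :
    ∀ x ∈ wordRange s n, φ x ∈ wordRange s n := by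
  rw [← Module.End.mem_invtSubmodule_iff_forall_mem_of_mem,
    Module.End.mem_invtSubmodule_iff_map_le, wordRange, Submodule.map_iSup]
  refine iSup_le fun w => ?_
  rw [← range_comp, ← Module.End.mul_eq_comp]
  exact range_mul_ofFn_prod_le_wordRange hφ w

theorem finiteDimensional_wordRange {s : Set (V →ₗ[k] V)} [Finite s] {n : ℕ}
    (h : ∀ φs : Fin n → (V →ₗ[k] V), (∀ i, φs i ∈ s) →
      FiniteDimensional k (range (List.ofFn φs).prod)) :
    FiniteDimensional k (wordRange s n) :=
  have := fun w : Fin n → s => h _ fun i => (w i).2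
  Submodule.finiteDimensional_iSup _

theorem tateTrace_eq_trace_restrict_wordRange {s : Set (V →ₗ[k] V)} [Finite s] {n : ℕ}
    (h : ∀ φs : Fin n → (V →ₗ[k] V), (∀ i, φs i ∈ s) →
      FiniteDimensional k (range (List.ofFn φs).prod))
    {φ : V →ₗ[k] V} (hφ : φ ∈ s) :
    tateTrace φ = trace k (wordRange s n) (φ.restrict (wordRange_mapsTo hφ n)) :=
  have := finiteDimensional_wordRange h
  tateTrace_eq_trace_restrict_s18 φ _ (range_pow_le_wordRange hφ n)

end WordRange

end TateTrace

theorem tateTrace_linear_on_finitePotent_subspace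
    {k V : Type*} [Field k] [AddCommGroup V] [Module k V]
    (F : Submodule k (V →ₗ[k] V))
    (h : ∃ n : ℕ, ∀ φs : Fin n → (V →ₗ[k] V), (∀ i, φs i ∈ F) →
      FiniteDimensional k (LinearMap.range (List.ofFn φs).prod)) :
    (∀ φ ∈ F, IsFinitePotent φ) ∧
    (∀ φ ∈ F, ∀ ψ ∈ F, tateTrace (φ + ψ) = tateTrace φ + tateTrace ψ) ∧
    (∀ φ ∈ F, ∀ a : k, tateTrace (a • φ) = a * tateTrace φ) := by
  obtain ⟨n, hn⟩ := h
  have hwords {s : Set (V →ₗ[k] V)} (hs : s ⊆ F) (φs : Fin n → (V →ₗ[k] V))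
      (hφs : ∀ i, φs i ∈ s) : FiniteDimensional k (LinearMap.range (List.ofFn φs).prod) :=
    hn φs fun i => hs (hφs i)
  refine ⟨fun φ hφ => ⟨n, ?_⟩, fun φ hφ ψ hψ => ?_, fun φ hφ a => ?_⟩
  · have := finiteDimensional_wordRange (hwords (Set.singleton_subset_iff.mpr hφ))
    exact Submodule.finiteDimensional_of_le (range_pow_le_wordRange (Set.mem_singleton φ) n)
  · have hs : {φ, ψ, φ + ψ} ⊆ (F : Set (V →ₗ[k] V)) := by
      simp [Set.insert_subset_iff, hφ, hψ, F.add_mem hφ hψ]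
    rw [tateTrace_eq_trace_restrict_wordRange (hwords hs) (by simp),
      tateTrace_eq_trace_restrict_wordRange (hwords hs) (by simp : φ ∈ _),
      tateTrace_eq_trace_restrict_wordRange (hwords hs) (by simp : ψ ∈ _), ← map_add]
    rfl
  · have hs : {φ, a • φ} ⊆ (F : Set (V →ₗ[k] V)) := by
      simp [Set.insert_subset_iff, hφ, F.smul_mem a hφ]
    rw [tateTrace_eq_trace_restrict_wordRange (hwords hs) (by simp),
      tateTrace_eq_trace_restrict_wordRange (hwords hs) (by simp : φ ∈ _), ← smul_eq_mul,
      ← map_smul]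
    rfl
end
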